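/- arXiv:1910.04238 — 5 statements merged into one kernel-verified Lean document; each statement's English description precedes it below -/
import Mathlib

section
/- Let M₁ = ℝ²∖{(0,0)} and let F : M₁ → M₁ be a bijection that is locally affine, i.e., every point of M₁ has an open neighborhood contained in M₁ on which F agrees with an affine map of ℝ². Then there exists an invertible linear map A : ℝ² → ℝ² such that F p = A p for all p ∈ M₁. Conversely, every invertible linear map of ℝ² restricts to such a bijection of M₁. (Hence the affine transformations of the once-punctured plane with the connection induced by ∇⁰ are exactly the restrictions of elements of GL₂(ℝ).) -/
/-!
A locally affine map has locally constant derivative, so on the connected set `M₁` its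
derivative is a single linear map `A` and `F = A + b` there. If `A v = 0` with `v ≠ 0`, then
`v` and `2 • v` have the same image, so injectivity of `F` makes `A` injective, hence invertible;
and then `b ≠ 0` is impossible, since `F` would send the nonzero point `A⁻¹ (-b)` to the origin.
-/

noncomputable section

/-- `f` is locally affine on `U ⊆ ℝ²`: every point of `U` has an open neighborhood
contained in `U` on which `f` agrees with an affine map `q ↦ A q + b` of `ℝ²`. -/
def LocallyAffineOn (U : Set (ℝ × ℝ)) (f : ℝ × ℝ → ℝ × ℝ) : Prop :=
  ∀ p ∈ U, ∃ V : Set (ℝ × ℝ), V ⊆ U ∧ IsOpen V ∧ p ∈ V ∧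
    ∃ (A : (ℝ × ℝ) →ₗ[ℝ] ℝ × ℝ) (b : ℝ × ℝ), ∀ q ∈ V, f q = A q + b

/-- The once-punctured plane `M₁ = ℝ² ∖ {(0,0)}`. -/
def M₁ : Set (ℝ × ℝ) := {p | p ≠ (0, 0)}

open Filter Topology Set

section Affine

variable {E F : Type*} [NormedAddCommGroup E] [NormedSpace ℝ E]
  [NormedAddCommGroup F] [NormedSpace ℝ F] {f : E → F} {U : Set E} {p : E}

theorem fderiv_eventuallyEq_of_eventuallyEq_affine {A : E →L[ℝ] F} {b : F}
    (h : f =ᶠ[𝓝 p] fun q => A q + b) : fderiv ℝ f =ᶠ[𝓝 p] fun _ => A :=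
  h.eventually_nhds.mono fun _ hq =>
    (EventuallyEq.fderiv_eq hq).trans (A.hasFDerivAt.add_const b).fderiv

theorem IsOpen.exists_eqOn_affine_of_eventuallyEq_affine (hUo : IsOpen U)
    (hUc : IsPreconnected U)
    (hf : ∀ p ∈ U, ∃ (A : E →L[ℝ] F) (b : F), f =ᶠ[𝓝 p] fun q => A q + b) :
    ∃ (A : E →L[ℝ] F) (b : F), EqOn f (fun q => A q + b) U := by
  have hdiff : DifferentiableOn ℝ f U := fun p hp => by
    obtain ⟨A, b, h⟩ := hf p hp
    exact ((A.hasFDerivAt.add_const b).congr_of_eventuallyEq h).differentiableAt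
      |>.differentiableWithinAt
  have hderiv : ∀ p ∈ U, HasFDerivAt (fderiv ℝ f) (0 : E →L[ℝ] E →L[ℝ] F) p := fun p hp => by
    obtain ⟨A, b, h⟩ := hf p hp
    exact (hasFDerivAt_const A p).congr_of_eventuallyEq
      (fderiv_eventuallyEq_of_eventuallyEq_affine h)
  obtain ⟨A, hA⟩ := hUo.exists_is_const_of_fderiv_eq_zero hUc
    (fun p hp => (hderiv p hp).differentiableAt.differentiableWithinAt)
    (fun p hp => (hderiv p hp).fderiv)
  obtain ⟨b, hb⟩ := hUo.exists_eq_add_of_fderiv_eq hUc hdiff A.differentiableOn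
    (fun p hp => (hA p hp).trans A.fderiv.symm)
  exact ⟨A, b, hb⟩

end Affine

theorem LocallyAffineOn.eventuallyEq_affine {U : Set (ℝ × ℝ)} {f : ℝ × ℝ → ℝ × ℝ}
    (hf : LocallyAffineOn U f) {p : ℝ × ℝ} (hp : p ∈ U) :
    ∃ (A : (ℝ × ℝ) →L[ℝ] ℝ × ℝ) (b : ℝ × ℝ), f =ᶠ[𝓝 p] fun q => A q + b := by
  obtain ⟨V, -, hVo, hpV, A, b, hA⟩ := hf p hp
  exact ⟨LinearMap.toContinuousLinearMap A, b, eventually_of_mem (hVo.mem_nhds hpV) hA⟩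

theorem M₁_eq_compl_zero : M₁ = {0}ᶜ := rfl

theorem isOpen_M₁ : IsOpen M₁ := isOpen_compl_singleton

theorem isPreconnected_M₁ : IsPreconnected M₁ := by
  refine (isConnected_compl_singleton_of_one_lt_rank ?_ _).isPreconnected
  simp only [rank_prod', Module.rank_self]
  norm_num

section ComplZero

variable {E F : Type*} [AddCommGroup E] [AddCommGroup F]

theorem LinearMap.injective_of_injOn_compl_zero {K : Type*} [Field K] [CharZero K]
    [Module K E] [Module K F] {A : E →ₗ[K] F} {b : F}
    (h : InjOn (fun q => A q + b) {0}ᶜ) : Function.Injective A := by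
  refine (injective_iff_map_eq_zero A).2 fun v hv => by_contra fun hv0 => hv0 ?_
  have h2v : (2 : K) • v ≠ 0 := smul_ne_zero two_ne_zero hv0
  have := h hv0 h2v (by simp [hv])
  rwa [two_smul, left_eq_add] at this

theorem LinearMap.eq_zero_of_mapsTo_compl_zero {R : Type*} [Semiring R] [Module R E]
    [Module R F] {A : E →ₗ[R] F} (hA : Function.Surjective A) {b : F}
    (h : MapsTo (fun q => A q + b) {0}ᶜ {0}ᶜ) : b = 0 := by
  obtain ⟨q, hq⟩ := hA (-b)
  by_contra hb
  have hq0 : q ≠ 0 := by rintro rfl; exact hb (by simpa using hq.symm)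
  exact h hq0 (by simp [hq])

end ComplZero

/-- Every locally affine bijection of `M₁ = ℝ²∖{(0,0)}` is the restriction of an
invertible linear map of `ℝ²`, and conversely every invertible linear map of `ℝ²`
restricts to a locally affine bijection of `M₁`. -/
theorem affine_transformations_of_once_punctured_plane :
    (∀ F : ℝ × ℝ → ℝ × ℝ, Set.BijOn F M₁ M₁ → LocallyAffineOn M₁ F →
      ∃ A : (ℝ × ℝ) ≃ₗ[ℝ] ℝ × ℝ, ∀ p ∈ M₁, F p = A p) ∧
    (∀ A : (ℝ × ℝ) ≃ₗ[ℝ] ℝ × ℝ,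
      Set.BijOn (fun p => A p) M₁ M₁ ∧ LocallyAffineOn M₁ (fun p => A p)) := by
  refine ⟨fun F hbij hloc => ?_, fun A => ⟨?_, ?_⟩⟩
  · obtain ⟨A, b, hAb⟩ := isOpen_M₁.exists_eqOn_affine_of_eventuallyEq_affine isPreconnected_M₁
      fun p hp => hloc.eventuallyEq_affine hp
    rw [M₁_eq_compl_zero] at hbij hAb
    have hinj : Function.Injective (A : (ℝ × ℝ) →ₗ[ℝ] ℝ × ℝ) :=
      LinearMap.injective_of_injOn_compl_zero (hbij.injOn.congr hAb)
    have hsurj := LinearMap.injective_iff_surjective.1 hinj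
    obtain rfl : b = 0 := LinearMap.eq_zero_of_mapsTo_compl_zero hsurj (hbij.mapsTo.congr hAb)
    exact ⟨LinearEquiv.ofBijective _ ⟨hinj, hsurj⟩, fun p hp => (hAb hp).trans (add_zero _)⟩
  · exact A.toEquiv.bijOn fun p => by simp [M₁_eq_compl_zero]
  · exact fun p hp => ⟨M₁, subset_rfl, isOpen_M₁, hp, A, 0, fun q _ => (add_zero _).symm⟩
end
end

section
/- Let M₂ = ℝ²∖{(0,0),(0,1)} and let F : M₂ → M₂ be a bijection that is locally affine, i.e., every point of M₂ has an open neighborhood contained in M₂ on which F agrees with an affine map of ℝ². Then there exist real numbers a ≠ 0 and b such that either F(x,y) = (a x, b x + y) for all (x,y) ∈ M₂, or F(x,y) = (a x, b x − y + 1) for all (x,y) ∈ M₂. Conversely, every map of either of these two forms with a ≠ 0 is a locally affine bijection of M₂. -/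
/-!
A locally affine map is real-analytic and `M₂` is connected, so by the identity theorem `F`
agrees on all of `M₂` with one affine map `g`. Since `F` is injective on the cofinite set `M₂`,
the linear part of `g` is injective, so `g` is an affine bijection of `ℝ²`; mapping `M₂` onto
itself, it permutes the two punctures `(0,0)` and `(0,1)`, and the two possible permutations give
the two families. Conversely, each map of either family is an affine bijection of `ℝ²`
permuting the punctures.
-/

noncomputable section

/-- The twice-punctured plane `M₂ = ℝ² ∖ {(0,0), (0,1)}`. -/
def M₂ : Set (ℝ × ℝ) := {p | p ≠ (0, 0) ∧ p ≠ (0, 1)}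

open Set Function

lemma M₂_eq_compl : M₂ = ({(0, 0), (0, 1)} : Set (ℝ × ℝ))ᶜ := by
  ext p
  simp [M₂, not_or]

lemma isOpen_M₂ : IsOpen M₂ := by
  rw [M₂_eq_compl]
  exact (toFinite _).isClosed.isOpen_compl

lemma isPreconnected_M₂ : IsPreconnected M₂ := by
  rw [M₂_eq_compl]
  have hrank : 1 < Module.rank ℝ (ℝ × ℝ) := by
    rw [rank_prod', Module.rank_self]
    norm_num
  exact ((toFinite _).countable.isConnected_compl_of_one_lt_rank hrank).isPreconnected

lemma analyticOnNhd_linearMap_add_const {E F : Type*} [NormedAddCommGroup E] [NormedSpace ℝ E]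
    [FiniteDimensional ℝ E] [NormedAddCommGroup F] [NormedSpace ℝ F] (A : E →ₗ[ℝ] F) (b : F) :
    AnalyticOnNhd ℝ (fun q => A q + b) univ := fun p _ =>
  (LinearMap.toContinuousLinearMap A).analyticAt p |>.add analyticAt_const

namespace LocallyAffineOn

variable {U : Set (ℝ × ℝ)} {f : ℝ × ℝ → ℝ × ℝ}

lemma analyticOnNhd (hf : LocallyAffineOn U f) : AnalyticOnNhd ℝ f U := by
  intro p hp
  obtain ⟨V, -, hVo, hpV, A, b, hfV⟩ := hf p hp
  exact (analyticOnNhd_linearMap_add_const A b p trivial).congr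
    (Filter.eventually_of_mem (hVo.mem_nhds hpV) fun q hq => (hfV q hq).symm)

lemma exists_eqOn_of_isPreconnected (hf : LocallyAffineOn U f) (hU : IsPreconnected U)
    (hne : U.Nonempty) : ∃ (A : ℝ × ℝ →ₗ[ℝ] ℝ × ℝ) (b : ℝ × ℝ), EqOn f (fun q => A q + b) U := by
  obtain ⟨p, hp⟩ := hne
  obtain ⟨V, -, hVo, hpV, A, b, hfV⟩ := hf p hp
  exact ⟨A, b, hf.analyticOnNhd.eqOn_of_preconnected_of_eventuallyEq
    (fun q _ => analyticOnNhd_linearMap_add_const A b q trivial) hU hp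
    (Filter.eventually_of_mem (hVo.mem_nhds hpV) hfV)⟩

end LocallyAffineOn

lemma locallyAffineOn_linearMap_add_const {U : Set (ℝ × ℝ)} (hU : IsOpen U)
    (A : ℝ × ℝ →ₗ[ℝ] ℝ × ℝ) (b : ℝ × ℝ) : LocallyAffineOn U (fun q => A q + b) :=
  fun _ hp => ⟨U, subset_rfl, hU, hp, A, b, fun _ _ => rfl⟩

/-- A nonzero kernel vector `v` would identify `p` and `p + v` for all but finitely many `p`. -/
lemma injective_of_injOn_of_finite_compl {E F G : Type*} [AddGroup E] [Infinite E] [AddGroup F]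
    [FunLike G E F] [AddMonoidHomClass G E F] {A : G} {s : Set E} (hs : sᶜ.Finite)
    (hA : InjOn A s) : Injective A := by
  refine (injective_iff_map_eq_zero A).2 fun v hv => ?_
  have hbad : (sᶜ ∪ (· + v) ⁻¹' sᶜ).Finite := hs.union (hs.preimage (add_left_injective v).injOn)
  obtain ⟨p, hp⟩ := hbad.infinite_compl.nonempty
  simp only [mem_compl_iff, mem_union, mem_preimage, not_or, not_not] at hp
  have hpv : p + v = p := hA hp.2 hp.1 (by rw [map_add, hv, add_zero])
  exact left_eq_add.mp hpv.symm

lemma bijective_linearMap_add_const {E : Type*} [AddCommGroup E] [Module ℝ E]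
    [FiniteDimensional ℝ E] {A : E →ₗ[ℝ] E} (hA : Injective A) (b : E) :
    Bijective (fun q => A q + b) :=
  (Equiv.addRight b).bijective.comp ⟨hA, LinearMap.injective_iff_surjective.1 hA⟩

lemma Set.bijOn_compl_iff {α : Type*} {g : α → α} {s : Set α} (hg : Bijective g) :
    BijOn g sᶜ sᶜ ↔ BijOn g s s :=
  ⟨fun h => compl_compl s ▸ h.compl hg, fun h => h.compl hg⟩

lemma Set.MapsTo.eq_or_swap_of_pair {α : Type*} {g : α → α} {x y : α}
    (hmaps : MapsTo g {x, y} {x, y}) (hinj : InjOn g {x, y}) :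
    (g x = x ∧ g y = y) ∨ (g x = y ∧ g y = x) := by
  have hx : g x = x ∨ g x = y := hmaps (mem_insert x {y})
  have hy : g y = x ∨ g y = y := hmaps (mem_insert_of_mem x rfl)
  have hxy : g x = g y → x = y := fun h => hinj (mem_insert x {y}) (mem_insert_of_mem x rfl) h
  rcases hx with hx | hx <;> rcases hy with hy | hy
  · obtain rfl := hxy (hx.trans hy.symm); exact Or.inl ⟨hx, hy⟩
  · exact Or.inl ⟨hx, hy⟩
  · exact Or.inr ⟨hx, hy⟩
  · obtain rfl := hxy (hx.trans hy.symm); exact Or.inl ⟨hx, hy⟩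

lemma linearMap_prod_apply (A : ℝ × ℝ →ₗ[ℝ] ℝ × ℝ) (p : ℝ × ℝ) :
    A p = p.1 • A (1, 0) + p.2 • A (0, 1) := by
  rw [← map_smul, ← map_smul, ← map_add]
  simp

lemma exists_eq_of_bijOn_M₂ {A : ℝ × ℝ →ₗ[ℝ] ℝ × ℝ} (hA : Injective A) {b : ℝ × ℝ}
    (hM : BijOn (fun q => A q + b) M₂ M₂) :
    ∃ a c : ℝ, a ≠ 0 ∧
      ((∀ p, A p + b = (a * p.1, c * p.1 + p.2)) ∨
       (∀ p, A p + b = (a * p.1, c * p.1 - p.2 + 1))) := by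
  have hg := bijective_linearMap_add_const hA b
  rw [M₂_eq_compl, Set.bijOn_compl_iff hg] at hM
  obtain ⟨a, c, hform⟩ : ∃ a c : ℝ, (∀ p, A p + b = (a * p.1, c * p.1 + p.2)) ∨
      (∀ p, A p + b = (a * p.1, c * p.1 - p.2 + 1)) := by
    refine ⟨(A (1, 0)).1, (A (1, 0)).2, ?_⟩
    rcases hM.mapsTo.eq_or_swap_of_pair hM.injOn with ⟨h₀, h₁⟩ | ⟨h₀, h₁⟩
    all_goals
      simp only [Prod.mk_zero_zero, map_zero, zero_add] at h₀
      subst h₀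
    · have he : A (0, 1) = (0, 1) := by simpa using h₁
      refine Or.inl fun p => ?_
      rw [linearMap_prod_apply, he]
      ext <;> simp [mul_comm]
    · have he : A (0, 1) = (0, -1) := by
        rw [eq_sub_of_add_eq h₁]
        simp
      refine Or.inr fun p => ?_
      rw [linearMap_prod_apply, he]
      ext <;> simp [mul_comm]
      ring
  obtain ⟨p, hp⟩ := hg.2 (1, 0)
  have hfst : a * p.1 = 1 := by
    rcases hform with h | h <;> simpa [h] using congrArg Prod.fst hp
  exact ⟨a, c, left_ne_zero_of_mul_eq_one hfst, hform⟩

def shear (a c s : ℝ) : ℝ × ℝ →ₗ[ℝ] ℝ × ℝ :=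
  (a • LinearMap.fst ℝ ℝ ℝ).prod (c • LinearMap.fst ℝ ℝ ℝ + s • LinearMap.snd ℝ ℝ ℝ)

lemma shear_apply (a c s : ℝ) (p : ℝ × ℝ) : shear a c s p = (a * p.1, c * p.1 + s * p.2) := rfl

lemma shear_injective {a s : ℝ} (ha : a ≠ 0) (hs : s ≠ 0) (c : ℝ) : Injective (shear a c s) := by
  intro p q h
  simp only [shear_apply, Prod.mk.injEq] at h
  have h₁ : p.1 = q.1 := mul_left_cancel₀ ha h.1
  rw [h₁, add_right_inj] at h
  exact Prod.ext h₁ (mul_left_cancel₀ hs h.2)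

lemma bijOn_M₂_shear_add_const {a s c : ℝ} (ha : a ≠ 0) (hs : s ≠ 0) {b : ℝ × ℝ}
    (hpunct : ((fun q => shear a c s q + b) '' {(0, 0), (0, 1)} : Set (ℝ × ℝ)) = {(0, 0), (0, 1)}) :
    BijOn (fun q => shear a c s q + b) M₂ M₂ := by
  have hg := bijective_linearMap_add_const (shear_injective ha hs c) b
  rw [M₂_eq_compl, Set.bijOn_compl_iff hg]
  have h := hg.1.injOn.bijOn_image (s := {(0, 0), (0, 1)})
  rwa [hpunct] at h

lemma shear_one_add_zero (a c : ℝ) :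
    (fun q => shear a c 1 q + 0) = fun p : ℝ × ℝ => (a * p.1, c * p.1 + p.2) := by
  ext <;> simp [shear_apply]

lemma shear_neg_one_add (a c : ℝ) :
    (fun q => shear a c (-1) q + (0, 1)) = fun p : ℝ × ℝ => (a * p.1, c * p.1 - p.2 + 1) := by
  ext <;> simp [shear_apply, sub_eq_add_neg]

/-- Every locally affine bijection of `M₂ = ℝ²∖{(0,0),(0,1)}` has the form
`(x,y) ↦ (ax, bx + y)` or `(x,y) ↦ (ax, bx − y + 1)` with `a ≠ 0`, and conversely every
map of one of these two forms is a locally affine bijection of `M₂`. -/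
theorem affine_transformations_of_twice_punctured_plane :
    (∀ F : ℝ × ℝ → ℝ × ℝ, Set.BijOn F M₂ M₂ → LocallyAffineOn M₂ F →
      ∃ a b : ℝ, a ≠ 0 ∧
        ((∀ p ∈ M₂, F p = (a * p.1, b * p.1 + p.2)) ∨
         (∀ p ∈ M₂, F p = (a * p.1, b * p.1 - p.2 + 1)))) ∧
    (∀ a b : ℝ, a ≠ 0 →
      (Set.BijOn (fun p : ℝ × ℝ => (a * p.1, b * p.1 + p.2)) M₂ M₂ ∧
        LocallyAffineOn M₂ (fun p : ℝ × ℝ => (a * p.1, b * p.1 + p.2))) ∧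
      (Set.BijOn (fun p : ℝ × ℝ => (a * p.1, b * p.1 - p.2 + 1)) M₂ M₂ ∧
        LocallyAffineOn M₂ (fun p : ℝ × ℝ => (a * p.1, b * p.1 - p.2 + 1)))) := by
  refine ⟨fun F hF hloc => ?_, fun a c ha => ?_⟩
  · obtain ⟨A, b, hFA⟩ := hloc.exists_eqOn_of_isPreconnected isPreconnected_M₂
      ⟨(1, 0), by simp [M₂]⟩
    have hM : BijOn (fun q => A q + b) M₂ M₂ := hF.congr hFA
    have hA : Injective A := injective_of_injOn_of_finite_compl (s := M₂)
      (by rw [M₂_eq_compl, compl_compl]; exact toFinite _) (hM.injOn.of_comp (g := (· + b)))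
    obtain ⟨a, c, ha, hform⟩ := exists_eq_of_bijOn_M₂ hA hM
    exact ⟨a, c, ha, hform.imp (fun h p hp => (hFA hp).trans (h p))
      (fun h p hp => (hFA hp).trans (h p))⟩
  · rw [← shear_one_add_zero, ← shear_neg_one_add]
    refine ⟨⟨bijOn_M₂_shear_add_const ha one_ne_zero ?_, locallyAffineOn_linearMap_add_const
      isOpen_M₂ _ _⟩, ⟨bijOn_M₂_shear_add_const ha (neg_ne_zero.2 one_ne_zero) ?_,
      locallyAffineOn_linearMap_add_const isOpen_M₂ _ _⟩⟩
    · simp [image_pair, shear_apply]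
    · simp [image_pair, shear_apply, pair_comm]
end
end

section
/- Let X be an affine vector field on ℝ², i.e., X p = A p + b with A : ℝ² → ℝ² linear and b ∈ ℝ². Then X restricts to a complete vector field on U = ℝ²∖{(0,0)} if and only if b = 0, i.e., if and only if X is linear. Consequently the space of complete affine vector fields on ℝ²∖{(0,0)} is 4-dimensional, with linear basis x ∂/∂x, y ∂/∂x, x ∂/∂y, y ∂/∂y. -/
/-!
The flow `t ↦ exp (t • A)` of a linear field consists of invertible maps, so the orbit of a point
`p ≠ 0` never reaches the origin. Conversely, the affine field `A + b` has a global integral curve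
`σ` through the origin. If `b ≠ 0` then `σ` leaves the origin, and by uniqueness of integral curves
of the Lipschitz field `A + b` the complete integral curve through a point `σ t₀ ≠ 0` is a time
shift of `σ`, hence passes through the origin. So the complete affine fields are the linear ones,
and `x ∂/∂x, y ∂/∂x, x ∂/∂y, y ∂/∂y` are the four matrix-entry coordinates of a linear map.
-/

noncomputable section

/-- A vector field `X` (restricted to an open set `U ⊆ ℝ²`) is complete if through every
point of `U` there is an integral curve of `X` defined on all of `ℝ` and staying in `U`. -/
def IsCompleteOn (U : Set (ℝ × ℝ)) (X : ℝ × ℝ → ℝ × ℝ) : Prop :=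
  ∀ p ∈ U, ∃ γ : ℝ → ℝ × ℝ, γ 0 = p ∧ (∀ t : ℝ, γ t ∈ U) ∧
    ∀ t : ℝ, HasDerivAt γ (X (γ t)) t

open NormedSpace

section LinearFlow

variable {E : Type*} [NormedAddCommGroup E] [NormedSpace ℝ E] [CompleteSpace E]

theorem hasDerivAt_exp_smul_apply (A : E →L[ℝ] E) (p : E) (t : ℝ) :
    HasDerivAt (fun s : ℝ => exp (s • A) p) (A (exp (t • A) p)) t := by
  simpa using (hasDerivAt_exp_smul_const' A t).clm_apply (hasDerivAt_const t p)

theorem exp_apply_ne_zero (A : E →L[ℝ] E) {p : E} (hp : p ≠ 0) : exp A p ≠ 0 := by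
  obtain ⟨u, hu⟩ := isUnit_exp_of_mem_ball (𝕂 := ℝ) (x := A)
    ((expSeries_radius_eq_top ℝ (E →L[ℝ] E)).symm ▸ edist_lt_top _ _)
  intro h
  apply hp
  calc p = (↑u⁻¹ * ↑u : E →L[ℝ] E) p := by simp
    _ = 0 := by simp [hu, h]

theorem exists_forall_hasDerivAt_affine (A : E →L[ℝ] E) (b p : E) :
    ∃ σ : ℝ → E, σ 0 = p ∧ ∀ t, HasDerivAt σ (A (σ t) + b) t := by
  -- `A + b` is the linear field `B` on `E × ℝ` restricted to the invariant hyperplane `z = 1`.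
  set B : E × ℝ →L[ℝ] E × ℝ :=
    (A.comp (ContinuousLinearMap.fst ℝ E ℝ) + (ContinuousLinearMap.snd ℝ E ℝ).smulRight b).prod 0
  have hB : ∀ q, B q = (A q.1 + q.2 • b, 0) := fun q => rfl
  set Γ : ℝ → E × ℝ := fun s => exp (s • B) (p, 1)
  have hΓ : ∀ t, HasDerivAt Γ (B (Γ t)) t := hasDerivAt_exp_smul_apply B (p, 1)
  have hΓ₂ : ∀ t, (Γ t).2 = 1 := by
    have hderiv : ∀ t, HasDerivAt (fun s => (Γ s).2) 0 t := fun t => by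
      simpa [hB, Function.comp_def] using
        (ContinuousLinearMap.snd ℝ E ℝ).hasFDerivAt.comp_hasDerivAt t (hΓ t)
    intro t
    simpa [Γ] using is_const_of_deriv_eq_zero (fun s => (hderiv s).differentiableAt)
      (fun s => (hderiv s).deriv) t 0
  refine ⟨fun s => (Γ s).1, by simp [Γ], fun t => ?_⟩
  simpa [hB, hΓ₂, Function.comp_def] using
    (ContinuousLinearMap.fst ℝ E ℝ).hasFDerivAt.comp_hasDerivAt t (hΓ t)

end LinearFlow

theorem IsCompleteOn.forall_mem_of_hasDerivAt {U : Set (ℝ × ℝ)} {X : ℝ × ℝ → ℝ × ℝ}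
    (hX : IsCompleteOn U X) {K : NNReal} (hK : LipschitzWith K X) {σ : ℝ → ℝ × ℝ}
    (hσ : ∀ t, HasDerivAt σ (X (σ t)) t) {t₀ : ℝ} (ht₀ : σ t₀ ∈ U) (t : ℝ) : σ t ∈ U := by
  obtain ⟨γ, hγ₀, hγU, hγ⟩ := hX (σ t₀) ht₀
  have hσγ : σ = fun s => γ (s - t₀) :=
    ODE_solution_unique_univ (v := fun _ => X) (s := fun _ => Set.univ) (t₀ := t₀)
      (fun _ => hK.lipschitzOnWith) (fun s => ⟨hσ s, trivial⟩)
      (fun s => ⟨(hγ (s - t₀)).comp_sub_const s t₀, trivial⟩) (by simp [hγ₀])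
  rw [hσγ]
  exact hγU (t - t₀)

theorem isCompleteOn_linear (A : (ℝ × ℝ) →ₗ[ℝ] ℝ × ℝ) : IsCompleteOn {p | p ≠ (0, 0)} A :=
  fun p hp => ⟨fun t => exp (t • A.toContinuousLinearMap) p, by simp,
    fun t => exp_apply_ne_zero _ hp, hasDerivAt_exp_smul_apply _ p⟩

theorem eq_zero_of_isCompleteOn_affine (A : (ℝ × ℝ) →ₗ[ℝ] ℝ × ℝ) (b : ℝ × ℝ)
    (h : IsCompleteOn {p | p ≠ (0, 0)} (fun p => A p + b)) : b = 0 := by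
  obtain ⟨σ, hσ₀, hσ⟩ := exists_forall_hasDerivAt_affine A.toContinuousLinearMap b 0
  by_contra hb
  obtain ⟨t₀, ht₀⟩ : ∃ t₀, σ t₀ ≠ 0 := by
    by_contra! hσ_zero
    have : HasDerivAt σ 0 0 := by simpa [funext hσ_zero] using hasDerivAt_const (0 : ℝ) (0 : ℝ × ℝ)
    exact hb (by simpa [hσ₀] using (hσ 0).unique this)
  exact h.forall_mem_of_hasDerivAt (A.toContinuousLinearMap.lipschitz.add (LipschitzWith.const b))
    hσ ht₀ 0 hσ₀

theorem isCompleteOn_affine_iff (A : (ℝ × ℝ) →ₗ[ℝ] ℝ × ℝ) (b : ℝ × ℝ) :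
    IsCompleteOn {p | p ≠ (0, 0)} (fun p => A p + b) ↔ b = 0 :=
  ⟨eq_zero_of_isCompleteOn_affine A b, by rintro rfl; simpa using isCompleteOn_linear A⟩

def coordinateFields : Fin 4 → ℝ × ℝ → ℝ × ℝ :=
  ![fun p => (p.1, 0), fun p => (p.2, 0), fun p => (0, p.1), fun p => (0, p.2)]

theorem range_coordinateFields : Set.range coordinateFields =
    {fun p : ℝ × ℝ => ((p.1, 0) : ℝ × ℝ), fun p : ℝ × ℝ => ((p.2, 0) : ℝ × ℝ),
     fun p : ℝ × ℝ => ((0, p.1) : ℝ × ℝ), fun p : ℝ × ℝ => ((0, p.2) : ℝ × ℝ)} := by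
  simp only [coordinateFields, Matrix.range_cons, Matrix.range_empty, Set.union_empty,
    Set.singleton_union]

theorem linearIndependent_coordinateFields : LinearIndependent ℝ coordinateFields := by
  rw [Fintype.linearIndependent_iff]
  intro c hc i
  have h₁ := congrFun hc (1, 0)
  have h₂ := congrFun hc (0, 1)
  simp only [coordinateFields, Fin.sum_univ_four, Finset.sum_apply, Pi.smul_apply, Prod.ext_iff]
    at h₁ h₂
  fin_cases i <;> simp_all

theorem mem_span_coordinateFields_iff {X : ℝ × ℝ → ℝ × ℝ} :
    X ∈ Submodule.span ℝ (Set.range coordinateFields) ↔ ∃ A : (ℝ × ℝ) →ₗ[ℝ] ℝ × ℝ, ⇑A = X := by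
  rw [Submodule.mem_span_range_iff_exists_fun]
  constructor
  · rintro ⟨c, rfl⟩
    refine ⟨(c 0 • LinearMap.fst ℝ ℝ ℝ + c 1 • LinearMap.snd ℝ ℝ ℝ).prod
      (c 2 • LinearMap.fst ℝ ℝ ℝ + c 3 • LinearMap.snd ℝ ℝ ℝ), ?_⟩
    ext p <;> simp [coordinateFields, Fin.sum_univ_four]
  · rintro ⟨A, rfl⟩
    refine ⟨![(A (1, 0)).1, (A (0, 1)).1, (A (1, 0)).2, (A (0, 1)).2], ?_⟩
    funext p
    conv_rhs => rw [show p = p.1 • (1, 0) + p.2 • (0, 1) by simp, map_add, map_smul, map_smul]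
    simp [coordinateFields, Fin.sum_univ_four, Prod.ext_iff, mul_comm]

/-- An affine vector field `X p = A p + b` on `ℝ²` restricts to a complete vector field on
`ℝ²∖{(0,0)}` if and only if `b = 0`, i.e. iff `X` is linear; consequently the complete
affine vector fields on `ℝ²∖{(0,0)}` form the 4-dimensional space with linear basis
`x ∂/∂x, y ∂/∂x, x ∂/∂y, y ∂/∂y`. -/
theorem complete_affine_vector_fields_once_punctured_plane :
    (∀ (A : (ℝ × ℝ) →ₗ[ℝ] ℝ × ℝ) (b : ℝ × ℝ),
      IsCompleteOn {p | p ≠ (0, 0)} (fun p => A p + b) ↔ b = 0) ∧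
    LinearIndependent ℝ
      ![fun p : ℝ × ℝ => ((p.1, 0) : ℝ × ℝ), fun p : ℝ × ℝ => ((p.2, 0) : ℝ × ℝ),
        fun p : ℝ × ℝ => ((0, p.1) : ℝ × ℝ), fun p : ℝ × ℝ => ((0, p.2) : ℝ × ℝ)] ∧
    {X : ℝ × ℝ → ℝ × ℝ |
        (∃ (A : (ℝ × ℝ) →ₗ[ℝ] ℝ × ℝ) (b : ℝ × ℝ), ∀ p, X p = A p + b) ∧
          IsCompleteOn {p | p ≠ (0, 0)} X} =
      ↑(Submodule.span ℝ
        {fun p : ℝ × ℝ => ((p.1, 0) : ℝ × ℝ), fun p : ℝ × ℝ => ((p.2, 0) : ℝ × ℝ),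
         fun p : ℝ × ℝ => ((0, p.1) : ℝ × ℝ), fun p : ℝ × ℝ => ((0, p.2) : ℝ × ℝ)}) := by
  refine ⟨isCompleteOn_affine_iff, linearIndependent_coordinateFields, ?_⟩
  rw [← range_coordinateFields]
  ext X
  simp only [Set.mem_ofPred_eq, SetLike.mem_coe, mem_span_coordinateFields_iff]
  constructor
  · rintro ⟨⟨A, b, hX⟩, hc⟩
    obtain rfl : X = fun p => A p + b := funext hX
    obtain rfl := (isCompleteOn_affine_iff A b).1 hc
    exact ⟨A, by simp⟩
  · rintro ⟨A, rfl⟩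
    exact ⟨⟨A, 0, by simp⟩, by simpa using (isCompleteOn_affine_iff A 0).2 rfl⟩
end
end

section
/- Let X be an affine vector field on ℝ², i.e., X p = A p + b with A : ℝ² → ℝ² linear and b ∈ ℝ². Then X restricts to a complete vector field on U = ℝ²∖{(0,0),(0,1)} if and only if there exist real numbers a, c such that X(x,y) = (a x, c x) for all (x,y) ∈ ℝ². Consequently the space of complete affine vector fields on ℝ²∖{(0,0),(0,1)} is 2-dimensional, with linear basis x ∂/∂x, x ∂/∂y. -/
/-!
An affine vector field is globally Lipschitz, so its integral curves are unique. If it does not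
vanish at a removed point `q`, its local integral curve through `q` immediately enters the
punctured plane; by uniqueness, the complete integral curve through such a point would then reach
`q` in finite time, which is impossible. So the field vanishes at `(0,0)` and `(0,1)`, which for an
affine field forces `X (x, y) = x • X (1, 0)`. Conversely `(a x, c x)` has the explicit flow
`(x e^{at}, y + c ∫₀ᵗ x e^{as} ds)`, which fixes the `y`-axis pointwise and preserves `x ≠ 0`.
-/

noncomputable section

open Set Filter Topology

theorem IsCompleteOn.apply_eq_zero_of_eventually_mem_nhdsNE {U : Set (ℝ × ℝ)}
    {X : ℝ × ℝ → ℝ × ℝ} {K : NNReal} {q : ℝ × ℝ} (hX : IsCompleteOn U X)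
    (hXq : ContDiffAt ℝ 1 X q) (hlip : LipschitzWith K X) (hqU : q ∉ U)
    (hU : ∀ᶠ p in 𝓝[≠] q, p ∈ U) : X q = 0 := by
  by_contra hXq0
  obtain ⟨α, hα0, ε, hε, hα⟩ :=
    hXq.exists_forall_mem_closedBall_exists_eq_forall_mem_Ioo_hasDerivAt₀ 0
  simp only [zero_sub, zero_add] at hα
  have h0 : (0 : ℝ) ∈ Ioo (-ε) ε := ⟨neg_lt_zero.2 hε, hε⟩
  have hαU : ∀ᶠ t in 𝓝[≠] (0 : ℝ), α t ∈ U :=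
    ((hα 0 h0).tendsto_nhdsNE (by rwa [hα0])).eventually (hα0 ▸ hU)
  obtain ⟨t₀, ht₀U, ht₀⟩ :=
    (hαU.and (mem_nhdsWithin_of_mem_nhds (isOpen_Ioo.mem_nhds h0))).exists
  obtain ⟨γ, hγ0, hγU, hγ⟩ := hX (α t₀) ht₀U
  have hshift : ∀ t, HasDerivAt (fun t => γ (t - t₀)) (X (γ (t - t₀))) t := fun t =>
    (hγ (t - t₀)).comp_sub_const t t₀
  have heq : EqOn α (fun t => γ (t - t₀)) (Ioo (-ε) ε) :=
    ODE_solution_unique_of_mem_Ioo (v := fun _ => X) (s := fun _ => univ)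
      (fun _ _ => hlip.lipschitzOnWith) ht₀ (fun t ht => ⟨hα t ht, mem_univ _⟩)
      (fun t _ => ⟨hshift t, mem_univ _⟩) (by simp [hγ0])
  exact hqU (hα0 ▸ heq h0 ▸ hγU (0 - t₀))

theorem LinearMap.add_const_eq_fst_smul_of_apply_eq_zero {M : Type*} [AddCommGroup M]
    [Module ℝ M] {A : ℝ × ℝ →ₗ[ℝ] M} {b : M} (h₀ : A (0, 0) + b = 0)
    (h₁ : A (0, 1) + b = 0) (p : ℝ × ℝ) : A p + b = p.1 • A (1, 0) := by
  have hb : b = 0 := by rwa [Prod.mk_zero_zero, map_zero, zero_add] at h₀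
  have hA₁ : A (0, 1) = 0 := by simpa [hb] using h₁
  have hp : p = p.1 • ((1, 0) : ℝ × ℝ) + p.2 • (0, 1) := by simp
  rw [hb, add_zero, hp, map_add, map_smul, map_smul, hA₁]
  simp

theorem isCompleteOn_fst_mul {U : Set (ℝ × ℝ)} (hU : {p | p.1 ≠ 0} ⊆ U) (a c : ℝ) :
    IsCompleteOn U (fun p => (a * p.1, c * p.1)) := by
  intro p hp
  set γ : ℝ → ℝ × ℝ := fun t =>
    (p.1 * Real.exp (a * t), p.2 + c * ∫ s in (0 : ℝ)..t, p.1 * Real.exp (a * s))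
  have hcont : Continuous fun s => p.1 * Real.exp (a * s) := by fun_prop
  refine ⟨γ, by simp [γ], fun t => ?_, fun t => ?_⟩
  · by_cases h : p.1 = 0
    · convert hp using 1
      ext <;> simp [γ, h]
    · exact hU (mul_ne_zero h (Real.exp_ne_zero _))
  · have hfst : HasDerivAt (fun t => p.1 * Real.exp (a * t)) (a * (p.1 * Real.exp (a * t))) t :=
      (((hasDerivAt_id t).const_mul a).exp.const_mul p.1).congr_deriv (by simp only [id]; ring)
    exact hfst.prodMk (((hcont.integral_hasStrictDerivAt 0 t).hasDerivAt.const_mul c).const_add p.2)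

theorem isCompleteOn_add_const_iff (A : (ℝ × ℝ) →ₗ[ℝ] ℝ × ℝ) (b : ℝ × ℝ) :
    IsCompleteOn {p | p ≠ (0, 0) ∧ p ≠ (0, 1)} (fun p => A p + b) ↔
      ∃ a c : ℝ, ∀ p : ℝ × ℝ, A p + b = (a * p.1, c * p.1) := by
  refine ⟨fun hX => ?_, fun ⟨a, c, h⟩ => ?_⟩
  · have hC : ContDiff ℝ 1 (fun p => A p + b) :=
      A.toContinuousLinearMap.contDiff.add contDiff_const
    have hL : LipschitzWith (‖A.toContinuousLinearMap‖₊ + 0) (fun p => A p + b) :=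
      A.toContinuousLinearMap.lipschitz.add (LipschitzWith.const b)
    have hne : ((0, 0) : ℝ × ℝ) ≠ (0, 1) := by simp
    have h₀ := hX.apply_eq_zero_of_eventually_mem_nhdsNE (q := (0, 0)) hC.contDiffAt hL
      (by simp) (eventually_mem_nhdsWithin.and (eventually_ne_nhdsWithin hne))
    have h₁ := hX.apply_eq_zero_of_eventually_mem_nhdsNE (q := (0, 1)) hC.contDiffAt hL
      (by simp) ((eventually_ne_nhdsWithin hne.symm).and eventually_mem_nhdsWithin)
    refine ⟨(A (1, 0)).1, (A (1, 0)).2, fun p => ?_⟩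
    rw [LinearMap.add_const_eq_fst_smul_of_apply_eq_zero h₀ h₁ p]
    exact Prod.ext (mul_comm _ _) (mul_comm _ _)
  · have hU : {p : ℝ × ℝ | p.1 ≠ 0} ⊆ {p | p ≠ (0, 0) ∧ p ≠ (0, 1)} := fun p hp =>
      ⟨by rintro rfl; exact hp rfl, by rintro rfl; exact hp rfl⟩
    simpa only [h] using isCompleteOn_fst_mul hU a c

/-- An affine vector field `X p = A p + b` on `ℝ²` restricts to a complete vector field on
`ℝ²∖{(0,0),(0,1)}` if and only if `X (x,y) = (a x, c x)` for some reals `a, c`;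
consequently the complete affine vector fields on `ℝ²∖{(0,0),(0,1)}` form the
2-dimensional space with linear basis `x ∂/∂x, x ∂/∂y`. -/
theorem complete_affine_vector_fields_twice_punctured_plane :
    (∀ (A : (ℝ × ℝ) →ₗ[ℝ] ℝ × ℝ) (b : ℝ × ℝ),
      IsCompleteOn {p | p ≠ (0, 0) ∧ p ≠ (0, 1)} (fun p => A p + b) ↔
        ∃ a c : ℝ, ∀ p : ℝ × ℝ, A p + b = (a * p.1, c * p.1)) ∧
    LinearIndependent ℝ
      ![fun p : ℝ × ℝ => ((p.1, 0) : ℝ × ℝ), fun p : ℝ × ℝ => ((0, p.1) : ℝ × ℝ)] ∧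
    {X : ℝ × ℝ → ℝ × ℝ |
        (∃ (A : (ℝ × ℝ) →ₗ[ℝ] ℝ × ℝ) (b : ℝ × ℝ), ∀ p, X p = A p + b) ∧
          IsCompleteOn {p | p ≠ (0, 0) ∧ p ≠ (0, 1)} X} =
      ↑(Submodule.span ℝ
        {fun p : ℝ × ℝ => ((p.1, 0) : ℝ × ℝ), fun p : ℝ × ℝ => ((0, p.1) : ℝ × ℝ)}) := by
  refine ⟨isCompleteOn_add_const_iff, ?_, ?_⟩
  · rw [linearIndependent_fin2]
    refine ⟨fun h => ?_, fun r h => ?_⟩ <;> simpa using congrFun h (1, 0)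
  · ext X
    simp only [mem_ofPred_eq, SetLike.mem_coe, Submodule.mem_span_pair]
    constructor
    · rintro ⟨⟨A, b, hX⟩, hXc⟩
      obtain rfl : X = fun p => A p + b := funext hX
      obtain ⟨a, c, h⟩ := (isCompleteOn_add_const_iff A b).1 hXc
      exact ⟨a, c, funext fun p => by simp [h p]⟩
    · rintro ⟨a, c, rfl⟩
      let A : (ℝ × ℝ) →ₗ[ℝ] ℝ × ℝ :=
        (a • LinearMap.fst ℝ ℝ ℝ).prod (c • LinearMap.fst ℝ ℝ ℝ)
      refine ⟨⟨A, 0, fun p => by simp [A]⟩, ?_⟩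
      convert (isCompleteOn_add_const_iff A 0).2 ⟨a, c, fun p => by simp [A]⟩ using 1
      funext p
      simp [A]
end
end

section
/- On the open half-plane U = {(x,y) ∈ ℝ² : x > 0}, consider the vector fields C₃(x,y) = (1/x, 0), C₄(x,y) = (y/x, 0), C₅(x,y) = (x + y²/x, 0), and C₆(x,y) = (−x y − y³/x, x² + y²). For every (α₃, α₄, α₅, α₆) ∈ ℝ⁴ with (α₃, α₄, α₅, α₆) ≠ (0,0,0,0), the vector field V = α₃ C₃ + α₄ C₄ + α₅ C₅ + α₆ C₆ is not complete on U: there exists a point p ∈ U for which there is no curve γ : ℝ → ℝ² with γ 0 = p, γ t ∈ U for all t ∈ ℝ, and γ'(t) = V(γ t) for all t ∈ ℝ. -/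
/-
If `α₆ ≠ 0`, then `u = α₆ y` satisfies `u' = α₆² (x² + y²) ≥ u²` along an integral curve, and a
solution of this Riccati inequality with `u 0 > 0` blows up in finite time. If `α₆ = 0`, then `y`
is constant along integral curves and `x²` solves the affine equation
`(x²)' = 2 α₅ x² + 2 (α₃ + α₄ y + α₅ y²)`; for a `y` where the constant term does not vanish and a
suitable initial value, `x²` reaches `0` in finite time, so the curve leaves the half-plane.
-/

noncomputable section

/-- The vector field `α₃ C₃ + α₄ C₄ + α₅ C₅ + α₆ C₆` on the half-plane `x > 0`, where
`C₃(x,y) = (1/x, 0)`, `C₄(x,y) = (y/x, 0)`, `C₅(x,y) = (x + y²/x, 0)` and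
`C₆(x,y) = (−xy − y³/x, x² + y²)`. -/
def Vfield (α₃ α₄ α₅ α₆ : ℝ) : ℝ × ℝ → ℝ × ℝ := fun p =>
  (α₃ * (1 / p.1) + α₄ * (p.2 / p.1) + α₅ * (p.1 + p.2 ^ 2 / p.1) +
      α₆ * (-(p.1 * p.2) - p.2 ^ 3 / p.1),
    α₆ * (p.1 ^ 2 + p.2 ^ 2))

open Real Set

theorem HasDerivAt.fst {𝕜 E F : Type*} [NontriviallyNormedField 𝕜] [NormedAddCommGroup E]
    [NormedSpace 𝕜 E] [NormedAddCommGroup F] [NormedSpace 𝕜 F] {f : 𝕜 → E × F} {f' : E × F}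
    {x : 𝕜} (h : HasDerivAt f f' x) : HasDerivAt (fun s => (f s).1) f'.1 x := by
  simpa using h.hasFDerivAt.fst.hasDerivAt

theorem HasDerivAt.snd {𝕜 E F : Type*} [NontriviallyNormedField 𝕜] [NormedAddCommGroup E]
    [NormedSpace 𝕜 E] [NormedAddCommGroup F] [NormedSpace 𝕜 F] {f : 𝕜 → E × F} {f' : E × F}
    {x : 𝕜} (h : HasDerivAt f f' x) : HasDerivAt (fun s => (f s).2) f'.2 x := by
  simpa using h.hasFDerivAt.snd.hasDerivAt

/-- `-1/v - t` is nondecreasing while `v > 0`, so `v` blows up before time `1 / v 0`. -/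
theorem false_of_hasDerivAt_of_sq_le {v v' : ℝ → ℝ} (hv : ∀ t, HasDerivAt v (v' t) t)
    (hsq : ∀ t, v t ^ 2 ≤ v' t) (h0 : 0 < v 0) : False := by
  have hpos : ∀ t ∈ Ici (0 : ℝ), 0 < v t := fun t ht =>
    h0.trans_le (monotone_of_hasDerivAt_nonneg hv (fun s => (sq_nonneg _).trans (hsq s)) ht)
  have hg : ∀ t ∈ Ici (0 : ℝ), HasDerivAt (fun s => -(v s)⁻¹ - s) (v' t / v t ^ 2 - 1) t :=
    fun t ht => by
      refine (((hv t).inv (hpos t ht).ne').neg.sub (hasDerivAt_id' t)).congr_deriv ?_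
      ring
  have hmono : MonotoneOn (fun s => -(v s)⁻¹ - s) (Ici 0) := by
    refine monotoneOn_of_hasDerivWithinAt_nonneg (convex_Ici 0)
      (fun t ht => (hg t ht).continuousAt.continuousWithinAt)
      (fun t ht => (hg t (interior_subset ht)).hasDerivWithinAt) fun t ht => ?_
    have := hpos t (interior_subset ht)
    rw [sub_nonneg, le_div_iff₀ (by positivity), one_mul]
    exact hsq t
  have hT := hmono self_mem_Ici (inv_pos.2 h0).le (inv_pos.2 h0).le
  have hvT := inv_pos.2 (hpos (v 0)⁻¹ (inv_pos.2 h0).le)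
  simp only at hT
  linarith

theorem affine_ode_first_integral {a b : ℝ} {w : ℝ → ℝ} (ha : a ≠ 0)
    (hw : ∀ t, HasDerivAt w (a * w t + b) t) (t : ℝ) :
    (w t + b / a) * exp (-(a * t)) = w 0 + b / a := by
  have hE : ∀ s, HasDerivAt (fun s => (w s + b / a) * exp (-(a * s))) 0 s := fun s => by
    refine (((hw s).add_const (b / a)).mul ((hasDerivAt_id' s).const_mul a).neg.exp).congr_deriv ?_
    field_simp
    ring
  simpa using is_const_of_deriv_eq_zero (fun s => (hE s).differentiableAt)
    (fun s => (hE s).deriv) t 0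

theorem exists_pos_affine_ode_eq_zero {a b : ℝ} (hb : b ≠ 0) :
    ∃ w₀ > 0, ∃ T, ∀ w : ℝ → ℝ, w 0 = w₀ → (∀ t, HasDerivAt w (a * w t + b) t) → w T = 0 := by
  rcases eq_or_ne a 0 with rfl | ha
  · refine ⟨1, one_pos, -b⁻¹, fun w hw₀ hw => ?_⟩
    have hE : ∀ s, HasDerivAt (fun s => w s - b * s) 0 s := fun s => by
      refine ((hw s).sub ((hasDerivAt_id' s).const_mul b)).congr_deriv ?_
      ring
    have := is_const_of_deriv_eq_zero (fun s => (hE s).differentiableAt)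
      (fun s => (hE s).deriv) (-b⁻¹) 0
    rw [hw₀, mul_neg, mul_inv_cancel₀ hb] at this
    linarith
  · -- `w₀ + b / a = r * (b / a)`, which the first integral carries to `(w T + b / a) * r` at `T`
    obtain ⟨r, hr, hw₀⟩ : ∃ r > 0, 0 < (r - 1) * (b / a) := by
      rcases (div_ne_zero hb ha).lt_or_gt with hba | hba
      · exact ⟨1 / 2, by norm_num, by nlinarith⟩
      · exact ⟨2, by norm_num, by nlinarith⟩
    refine ⟨(r - 1) * (b / a), hw₀, -log r / a, fun w h0 hw => ?_⟩
    have hE := affine_ode_first_integral ha hw (-log r / a)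
    rw [show -(a * (-log r / a)) = log r by field_simp, exp_log hr, h0] at hE
    have hwT : w (-log r / a) * r = 0 := by linarith
    exact (mul_eq_zero.1 hwT).resolve_right hr.ne'

theorem exists_add_mul_add_mul_sq_ne_zero {K : Type*} [Field K] [LinearOrder K]
    [IsStrictOrderedRing K] {a b c : K} (h : ¬(a = 0 ∧ b = 0 ∧ c = 0)) :
    ∃ y, a + b * y + c * y ^ 2 ≠ 0 := by
  by_contra! hall
  have h₀ := hall 0
  have h₁ := hall 1
  have h₂ := hall (-1)
  exact h ⟨by linarith, by linarith, by linarith⟩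

section Vfield

variable {α₃ α₄ α₅ α₆ : ℝ} {γ : ℝ → ℝ × ℝ} {t : ℝ}

theorem hasDerivAt_mul_snd_of_Vfield (hγ : HasDerivAt γ (Vfield α₃ α₄ α₅ α₆ (γ t)) t) :
    HasDerivAt (fun s => α₆ * (γ s).2) (α₆ ^ 2 * ((γ t).1 ^ 2 + (γ t).2 ^ 2)) t :=
  (hγ.snd.const_mul α₆).congr_deriv (by simp only [Vfield]; ring)

theorem snd_eq_of_Vfield_zero (hγ : ∀ t, HasDerivAt γ (Vfield α₃ α₄ α₅ 0 (γ t)) t)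
    (s : ℝ) : (γ s).2 = (γ 0).2 := by
  have hy : ∀ u, HasDerivAt (fun u => (γ u).2) 0 u := fun u => by
    simpa [Vfield] using (hγ u).snd
  exact is_const_of_deriv_eq_zero (fun u => (hy u).differentiableAt) (fun u => (hy u).deriv) s 0

theorem hasDerivAt_fst_sq_of_Vfield_zero (hγ : HasDerivAt γ (Vfield α₃ α₄ α₅ 0 (γ t)) t)
    (hx : (γ t).1 ≠ 0) :
    HasDerivAt (fun s => (γ s).1 ^ 2)
      (2 * α₅ * (γ t).1 ^ 2 + 2 * (α₃ + α₄ * (γ t).2 + α₅ * (γ t).2 ^ 2)) t :=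
  (hγ.fst.pow 2).congr_deriv (by simp only [Vfield]; field_simp; ring)

end Vfield

/-- No nonzero real linear combination of the vector fields `C₃, C₄, C₅, C₆` is complete
on the half-plane `U = {(x,y) : x > 0}`: there is a point of `U` through which no integral
curve defined on all of `ℝ` stays in `U`. -/
theorem no_nonzero_combination_is_complete (α₃ α₄ α₅ α₆ : ℝ)
    (h : ¬(α₃ = 0 ∧ α₄ = 0 ∧ α₅ = 0 ∧ α₆ = 0)) :
    ∃ p ∈ {q : ℝ × ℝ | 0 < q.1},
      ¬∃ γ : ℝ → ℝ × ℝ, γ 0 = p ∧ (∀ t : ℝ, γ t ∈ {q : ℝ × ℝ | 0 < q.1}) ∧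
        ∀ t : ℝ, HasDerivAt γ (Vfield α₃ α₄ α₅ α₆ (γ t)) t := by
  rcases eq_or_ne α₆ 0 with rfl | h₆
  · obtain ⟨y₀, hc⟩ := exists_add_mul_add_mul_sq_ne_zero fun h' => h ⟨h'.1, h'.2.1, h'.2.2, rfl⟩
    obtain ⟨w₀, hw₀, T, hT⟩ :=
      exists_pos_affine_ode_eq_zero (a := 2 * α₅) (mul_ne_zero two_ne_zero hc)
    refine ⟨(√w₀, y₀), sqrt_pos.2 hw₀, fun ⟨γ, h0, hU, hγ⟩ => ?_⟩
    have hy : ∀ t, (γ t).2 = y₀ := fun t => by rw [snd_eq_of_Vfield_zero hγ t, h0]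
    have hx₀ : (γ 0).1 ^ 2 = w₀ := by rw [h0]; exact sq_sqrt hw₀.le
    have hx : ∀ t, HasDerivAt (fun s => (γ s).1 ^ 2)
        (2 * α₅ * (γ t).1 ^ 2 + 2 * (α₃ + α₄ * y₀ + α₅ * y₀ ^ 2)) t := fun t => by
      simpa only [hy] using hasDerivAt_fst_sq_of_Vfield_zero (hγ t) (hU t).ne'
    exact (pow_pos (hU T) 2).ne' (hT (fun s => (γ s).1 ^ 2) hx₀ hx)
  · refine ⟨(1, α₆), zero_lt_one' ℝ, fun ⟨γ, h0, _, hγ⟩ =>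
      false_of_hasDerivAt_of_sq_le (fun t => hasDerivAt_mul_snd_of_Vfield (hγ t)) (fun t => ?_) ?_⟩
    · nlinarith [sq_nonneg (α₆ * (γ t).1)]
    · simp [h0, mul_self_pos.2 h₆]
end
end
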